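/- For fixed a ∈ ℤ₂^m, the map v ↦ i^{2bᵀv + vᵀPv} satisfies the chirp translation property: i^{2bᵀ(v+a) + (v+a)ᵀP(v+a)} = i^{2bᵀa + aᵀPa} · i^{2(b+Pa)ᵀv + vᵀPv} for all v ∈ ℤ₂^m, where b + Pa is computed over ℤ₂; i.e., translation of a binary chirp by a is again a binary chirp with the same P and shifted b, up to a constant phase. -/
import Mathlib


open scoped BigOperators
open Matrix

/-- The mod-4 exponent `2 bᵀv + vᵀPv` of a binary chirp, computed as a natural
number from the `{0,1}`-valued representatives of the `ZMod 2` entries. -/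
def chirpExp {m : ℕ} (P : Matrix (Fin m) (Fin m) (ZMod 2))
    (b v : Fin m → ZMod 2) : ℕ :=
  2 * ∑ i, (b i).val * (v i).val + ∑ i, ∑ j, (v i).val * (P i j).val * (v j).val

/-- The binary chirp codeword `φ_{P,b}` with power `Q`. -/
noncomputable def chirp {m : ℕ} (Q : ℝ) (P : Matrix (Fin m) (Fin m) (ZMod 2))
    (b v : Fin m → ZMod 2) : ℂ :=
  (Real.sqrt Q : ℂ) * Complex.I ^ chirpExp P b v

namespace ChirpAux

def e (x : ZMod 2) : ZMod 4 := x.val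

lemma e_zero : e 0 = 0 := by decide
lemma e_add : ∀ x y : ZMod 2, e (x+y) = e x + e y + 2 * e x * e y := by decide
lemma e_mul : ∀ x y : ZMod 2, e (x*y) = e x * e y := by decide
lemma two_e_add : ∀ x y : ZMod 2, 2 * e (x+y) = 2 * e x + 2 * e y := by decide
lemma four_mul : ∀ x : ZMod 4, 4 * x = 0 := by decide
lemma two_add_two : ∀ x : ZMod 4, 2 * x + 2 * x = 0 := by decide

lemma two_e_sum {ι : Type*} (s : Finset ι) (f : ι → ZMod 2) :
    2 * e (∑ j ∈ s, f j) = ∑ j ∈ s, 2 * e (f j) := by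
  induction s using Finset.cons_induction with
  | empty => simp [e_zero]
  | cons a s ha ih => rw [Finset.sum_cons, two_e_add, ih, Finset.sum_cons]

lemma swapG {m : ℕ} (G : Fin m → Fin m → ZMod 4) :
    ∑ i, ∑ j, G i j = ∑ i, ∑ j, G j i := Finset.sum_comm

lemma main_sum {m : ℕ} (Q : Fin m → Fin m → ZMod 4) (hQ : ∀ i j, Q i j = Q j i)
    (B V A D : Fin m → ZMod 4) (hD : ∀ i, 2 * D i = ∑ j, 2 * Q i j * A j) :
    2 * ∑ i, B i * (V i + A i + 2 * V i * A i)
      + ∑ i, ∑ j, (V i + A i + 2 * V i * A i) * Q i j * (V j + A j + 2 * V j * A j)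
    = (2 * ∑ i, B i * A i + ∑ i, ∑ j, A i * Q i j * A j)
      + (2 * ∑ i, (B i + D i + 2 * B i * D i) * V i + ∑ i, ∑ j, V i * Q i j * V j) := by
  -- linear part on the left
  have hlin : 2 * ∑ i, B i * (V i + A i + 2 * V i * A i)
      = 2 * ∑ i, B i * V i + 2 * ∑ i, B i * A i := by
    rw [Finset.mul_sum, Finset.mul_sum, Finset.mul_sum, ← Finset.sum_add_distrib]
    refine Finset.sum_congr rfl fun i _ => ?_
    have : (2 : ZMod 4) * (B i * (V i + A i + 2 * V i * A i))
        = 2 * (B i * V i) + 2 * (B i * A i) + 4 * (B i * V i * A i) := by ring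
    rw [this, four_mul, add_zero]
  -- linear part on the right
  have hlin' : 2 * ∑ i, (B i + D i + 2 * B i * D i) * V i
      = 2 * ∑ i, B i * V i + ∑ i, ∑ j, 2 * Q i j * A j * V i := by
    rw [Finset.mul_sum, Finset.mul_sum, ← Finset.sum_add_distrib]
    refine Finset.sum_congr rfl fun i _ => ?_
    have h1 : (2 : ZMod 4) * ((B i + D i + 2 * B i * D i) * V i)
        = 2 * (B i * V i) + (2 * D i) * V i + 4 * (B i * D i * V i) := by ring
    rw [h1, four_mul, add_zero, hD i, Finset.sum_mul]
  -- quadratic part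
  have hquad : ∑ i, ∑ j, (V i + A i + 2 * V i * A i) * Q i j * (V j + A j + 2 * V j * A j)
      = ∑ i, ∑ j, (V i * Q i j * V j + A i * Q i j * A j
          + (V i * Q i j * A j + A i * Q i j * V j)
          + (2 * (V i * A i * Q i j * (V j + A j)) + 2 * (V j * A j * Q i j * (V i + A i)))) := by
    refine Finset.sum_congr rfl fun i _ => Finset.sum_congr rfl fun j _ => ?_
    have : (V i + A i + 2 * V i * A i) * Q i j * (V j + A j + 2 * V j * A j)
        = (V i * Q i j * V j + A i * Q i j * A j
          + (V i * Q i j * A j + A i * Q i j * V j)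
          + (2 * (V i * A i * Q i j * (V j + A j)) + 2 * (V j * A j * Q i j * (V i + A i))))
          + 4 * (V i * A i * Q i j * (V j * A j)) := by ring
    rw [this, four_mul, add_zero]

  have merge2 : ∀ f g : Fin m → Fin m → ZMod 4,
      (∑ i, ∑ j, f i j) + (∑ i, ∑ j, g i j) = ∑ i, ∑ j, (f i j + g i j) := by
    intro f g
    simp only [← Finset.sum_add_distrib]
  have hsT : ∑ i, ∑ j, 2 * (V j * A j * Q i j * (V i + A i))
      = ∑ i, ∑ j, 2 * (V i * A i * Q i j * (V j + A j)) := by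
    rw [swapG fun i j => 2 * (V j * A j * Q i j * (V i + A i))]
    exact Finset.sum_congr rfl fun i _ => Finset.sum_congr rfl fun j _ => by rw [hQ j i]
  have hsC : ∑ i, ∑ j, A i * Q i j * V j = ∑ i, ∑ j, V i * Q i j * A j := by
    rw [swapG fun i j => A i * Q i j * V j]
    exact Finset.sum_congr rfl fun i _ => Finset.sum_congr rfl fun j _ => by
      rw [hQ j i]; ring
  have hTT : (∑ i, ∑ j, 2 * (V i * A i * Q i j * (V j + A j)))
      + (∑ i, ∑ j, 2 * (V i * A i * Q i j * (V j + A j))) = 0 := by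
    rw [merge2]
    simp only [two_add_two, Finset.sum_const_zero]
  have hVA : (∑ i, ∑ j, V i * Q i j * A j) + (∑ i, ∑ j, V i * Q i j * A j)
      = ∑ i, ∑ j, 2 * Q i j * A j * V i := by
    rw [merge2]
    exact Finset.sum_congr rfl fun i _ => Finset.sum_congr rfl fun j _ => by ring
  rw [hlin, hlin', hquad]
  simp only [Finset.sum_add_distrib]
  rw [hsT, hsC, hTT, hVA]
  abel

lemma e_def (x : ZMod 2) : ((x.val : ℕ) : ZMod 4) = e x := rfl

lemma I_pow_congr {x y : ℕ} (h : x % 4 = y % 4) : Complex.I ^ x = Complex.I ^ y := by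
  conv_lhs => rw [← Nat.div_add_mod x 4]
  conv_rhs => rw [← Nat.div_add_mod y 4]
  rw [pow_add, pow_add, pow_mul, pow_mul, Complex.I_pow_four, one_pow, one_pow, h]

lemma key {m : ℕ} (P : Matrix (Fin m) (Fin m) (ZMod 2)) (hP : Pᵀ = P)
    (b a v : Fin m → ZMod 2) :
    ((chirpExp P b (v + a) : ℕ) : ZMod 4)
      = ((chirpExp P b a : ℕ) : ZMod 4)
        + ((chirpExp P (b + P.mulVec a) v : ℕ) : ZMod 4) := by
  have hQ : ∀ i j, e (P i j) = e (P j i) := fun i j => by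
    conv_rhs => rw [← hP]
    rfl
  have hD : ∀ i, 2 * e ((P.mulVec a) i) = ∑ j, 2 * e (P i j) * e (a j) := by
    intro i
    have : P.mulVec a i = ∑ j, P i j * a j := rfl
    rw [this, two_e_sum]
    refine Finset.sum_congr rfl fun j _ => ?_
    rw [show (2 : ZMod 4) * e (P i j * a j) = 2 * (e (P i j) * e (a j)) from by
      rw [e_mul], mul_assoc]
  simp only [chirpExp]
  push_cast
  simp only [e_def, Pi.add_apply, e_add]
  exact main_sum (fun i j => e (P i j)) hQ (fun i => e (b i)) (fun i => e (v i))
    (fun i => e (a i)) (fun i => e (P.mulVec a i)) hD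

end ChirpAux

/-- Chirp translation property: translating a binary chirp by `a` gives a chirp
with the same `P` and translate `b + P a`, up to the constant phase
`i^(2bᵀa + aᵀPa)`. -/
theorem chirp_translation (m : ℕ) (hm : 1 ≤ m)
    (P : Matrix (Fin m) (Fin m) (ZMod 2)) (hP : Pᵀ = P)
    (b a : Fin m → ZMod 2) :
    ∀ v : Fin m → ZMod 2,
      Complex.I ^ chirpExp P b (v + a)
        = Complex.I ^ chirpExp P b a * Complex.I ^ chirpExp P (b + P.mulVec a) v := by
  intro v
  have hk : ((chirpExp P b (v + a) : ℕ) : ZMod 4)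
      = ((chirpExp P b a + chirpExp P (b + P.mulVec a) v : ℕ) : ZMod 4) := by
    push_cast
    exact ChirpAux.key P hP b a v
  have hmod : chirpExp P b (v + a) % 4
      = (chirpExp P b a + chirpExp P (b + P.mulVec a) v) % 4 :=
    (ZMod.natCast_eq_natCast_iff' _ _ _).mp hk
  rw [← pow_add]
  exact ChirpAux.I_pow_congr hmod
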